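/- arXiv:1507.06852 — 4 statements merged into one kernel-verified Lean document; each statement's English description precedes it below -/
import Mathlib

section
/- Let r, s be binary relations between types α and β with r a partial function, and let b : Set β. Then s equals the range restriction of r to b (i.e., s = {p ∈ r | p.2 ∈ b}) if and only if there exists a relation t such that r = s ∪ t, ran s = b ∩ ran r, and ran s ∩ ran t = ∅. -/
theorem rres_iff {α β : Type*} (r s : Set (α × β))
    (hr : ∀ x y₁ y₂, (x, y₁) ∈ r → (x, y₂) ∈ r → y₁ = y₂) (b : Set β) :
    s = {p ∈ r | p.2 ∈ b} ↔
      ∃ t : Set (α × β), r = s ∪ t ∧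
        Prod.snd '' s = b ∩ Prod.snd '' r ∧
        Prod.snd '' s ∩ Prod.snd '' t = ∅ := by
  constructor
  · rintro rfl
    refine ⟨{p ∈ r | p.2 ∉ b}, ?_, ?_, ?_⟩
    · ext p; by_cases h : p.2 ∈ b <;> simp [h]
    · ext y
      constructor
      · rintro ⟨p, ⟨hp, hpb⟩, rfl⟩
        exact ⟨hpb, p, hp, rfl⟩
      · rintro ⟨hy, p, hp, rfl⟩
        exact ⟨p, ⟨hp, hy⟩, rfl⟩
    · ext y
      simp only [Set.mem_inter_iff, Set.mem_image, Set.mem_empty_iff_false, iff_false]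
      rintro ⟨⟨p, ⟨_, hpb⟩, rfl⟩, ⟨q, ⟨_, hqb⟩, hq⟩⟩
      exact hqb (hq ▸ hpb)
  · rintro ⟨t, hrt, hran, hdisj⟩
    ext p
    constructor
    · intro hp
      have hpr : p ∈ r := hrt ▸ Set.mem_union_left t hp
      have : p.2 ∈ b ∩ Prod.snd '' r := hran ▸ ⟨p, hp, rfl⟩
      exact ⟨hpr, this.1⟩
    · rintro ⟨hpr, hpb⟩
      have hps : p.2 ∈ Prod.snd '' s := hran ▸ ⟨hpb, p, hpr, rfl⟩
      rcases hrt ▸ hpr with h | h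
      · exact h
      · exact absurd (hdisj ▸ ⟨hps, p, h, rfl⟩ : p.2 ∈ (∅ : Set β)) (by simp)
end

section
/- Let r, s be binary relations between types α and β with r a partial function, and let b : Set β. Then s equals the range anti-restriction of r by b (i.e., s = {p ∈ r | p.2 ∉ b}) if and only if there exist relations a and t such that r = a ∪ t, ran a = b ∩ ran r, ran a ∩ ran t = ∅, and s = r \ a. -/
theorem nrres_iff {α β : Type*} (r s : Set (α × β))
    (hr : ∀ x y₁ y₂, (x, y₁) ∈ r → (x, y₂) ∈ r → y₁ = y₂) (b : Set β) :
    s = {p ∈ r | p.2 ∉ b} ↔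
      ∃ a t : Set (α × β), r = a ∪ t ∧
        Prod.snd '' a = b ∩ Prod.snd '' r ∧
        Prod.snd '' a ∩ Prod.snd '' t = ∅ ∧
        s = r \ a := by
  constructor
  · rintro rfl
    refine ⟨{p ∈ r | p.2 ∈ b}, {p ∈ r | p.2 ∉ b}, ?_, ?_, ?_, ?_⟩
    · ext p; by_cases h : p.2 ∈ b <;> simp [h]
    · ext y
      constructor
      · rintro ⟨p, ⟨hp, hpb⟩, rfl⟩
        exact ⟨hpb, p, hp, rfl⟩
      · rintro ⟨hyb, p, hp, rfl⟩
        exact ⟨p, ⟨hp, hyb⟩, rfl⟩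
    · ext y
      simp only [Set.mem_inter_iff, Set.mem_image, Set.mem_empty_iff_false, iff_false]
      rintro ⟨⟨p, ⟨_, hpb⟩, rfl⟩, ⟨q, ⟨_, hqb⟩, hq⟩⟩
      exact hqb (hq ▸ hpb)
    · ext p
      constructor
      · rintro ⟨hp, hpb⟩; exact ⟨hp, fun h => hpb h.2⟩
      · rintro ⟨hp, hpa⟩; exact ⟨hp, fun hb => hpa ⟨hp, hb⟩⟩
  · rintro ⟨a, t, hrt, hran, hdisj, rfl⟩
    ext p
    simp only [Set.mem_diff, Set.mem_setOf_eq]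
    constructor
    · rintro ⟨hp, hpa⟩
      refine ⟨hp, fun hpb => ?_⟩
      have hpt : p ∈ t := by
        rcases hrt ▸ hp with h | h
        · exact absurd h hpa
        · exact h
      have hya : p.2 ∈ Prod.snd '' a := hran ▸ ⟨hpb, p, hp, rfl⟩
      have : p.2 ∈ (∅ : Set β) := hdisj ▸ ⟨hya, p, hpt, rfl⟩
      exact this
    · rintro ⟨hp, hpb⟩
      refine ⟨hp, fun hpa => ?_⟩
      have : p.2 ∈ b ∩ Prod.snd '' r := hran ▸ ⟨p, hpa, rfl⟩
      exact hpb this.1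
end

section
/- Let r be a binary relation on a type α (r : Set (α × α)) that is a partial function, and let a : Set α. Then r equals the identity relation on a (i.e., r = {p : α × α | p.1 ∈ a ∧ p.2 = p.1}) if and only if dom r = a, ran r = a, and the forward composition of r with itself equals r (r ; r = r). -/
theorem id_iff {α : Type*} (r : Set (α × α))
    (hr : ∀ x y₁ y₂, (x, y₁) ∈ r → (x, y₂) ∈ r → y₁ = y₂) (a : Set α) :
    r = {p : α × α | p.1 ∈ a ∧ p.2 = p.1} ↔
      Prod.fst '' r = a ∧ Prod.snd '' r = a ∧
        {p : α × α | ∃ y, (p.1, y) ∈ r ∧ (y, p.2) ∈ r} = r := by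
  constructor
  · rintro rfl
    refine ⟨?_, ?_, ?_⟩
    · ext x
      constructor
      · rintro ⟨⟨p1, p2⟩, ⟨h1, h2⟩, rfl⟩; exact h1
      · intro hx; exact ⟨(x, x), ⟨hx, rfl⟩, rfl⟩
    · ext x
      constructor
      · rintro ⟨⟨p1, p2⟩, ⟨h1, h2⟩, rfl⟩; simp only at h2 ⊢; rw [h2]; exact h1
      · intro hx; exact ⟨(x, x), ⟨hx, rfl⟩, rfl⟩
    · ext ⟨x, z⟩
      constructor
      · rintro ⟨y, ⟨hy1, hy2⟩, ⟨hz1, hz2⟩⟩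
        simp_all
      · rintro ⟨hx, hz⟩
        simp only at hx hz
        exact ⟨x, ⟨hx, rfl⟩, by simp [hz, hx]⟩
  · rintro ⟨hdom, hran, hcomp⟩
    have key : ∀ x y, (x, y) ∈ r → y = x := by
      intro x y hxy
      have hx_ran : x ∈ Prod.snd '' r := by
        rw [hran, ← hdom]; exact ⟨(x, y), hxy, rfl⟩
      obtain ⟨⟨u, v⟩, hu, hv⟩ := hx_ran
      simp only at hv
      rw [hv] at hu
      have huy : (u, y) ∈ r := by
        rw [← hcomp]; exact ⟨x, hu, hxy⟩
      exact hr u y x huy hu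
    ext ⟨x, y⟩
    constructor
    · intro hxy
      exact ⟨hdom ▸ ⟨(x, y), hxy, rfl⟩, key x y hxy⟩
    · rintro ⟨hxa, hyx⟩
      simp only at hxa hyx
      rw [hyx]
      have hx_dom : x ∈ Prod.fst '' r := hdom ▸ hxa
      obtain ⟨⟨u, z⟩, hz, hu⟩ := hx_dom
      simp only at hu
      rw [hu] at hz
      have := key x z hz
      rw [this] at hz
      exact hz
end

section
/- Let a : α, x, y : β, and let B be a binary relation between types β and γ that is a partial function. Then the forward composition ({(a,x)} ; B) equals {(a,y)} if and only if there exists a relation BR such that B = {(x,y)} ∪ BR, x ∉ dom BR, and BR is a partial function. -/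
theorem comp_singleton_iff {α β γ : Type*} (a : α) (x : β) (y : γ)
    (B : Set (β × γ))
    (hB : ∀ u v₁ v₂, (u, v₁) ∈ B → (u, v₂) ∈ B → v₁ = v₂) :
    {p : α × γ | ∃ z, (p.1, z) ∈ ({(a, x)} : Set (α × β)) ∧ (z, p.2) ∈ B}
        = ({(a, y)} : Set (α × γ)) ↔
      ∃ BR : Set (β × γ), B = {(x, y)} ∪ BR ∧ x ∉ Prod.fst '' BR ∧
        (∀ u v₁ v₂, (u, v₁) ∈ BR → (u, v₂) ∈ BR → v₁ = v₂) := by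
  constructor
  · intro h
    have hxy : (x, y) ∈ B := by
      have : (a, y) ∈ {p : α × γ | ∃ z, (p.1, z) ∈ ({(a, x)} : Set (α × β)) ∧ (z, p.2) ∈ B} := by
        rw [h]; rfl
      obtain ⟨z, hz, hzB⟩ := this
      have : z = x := by simpa using hz
      subst this; exact hzB
    refine ⟨B \ {(x, y)}, ?_, ?_, fun u v₁ v₂ h1 h2 => hB u v₁ v₂ h1.1 h2.1⟩
    · ext p; simp only [Set.mem_union, Set.mem_diff, Set.mem_singleton_iff]
      constructor
      · intro hp; by_cases hpe : p = (x, y)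
        · left; exact hpe
        · right; exact ⟨hp, hpe⟩
      · rintro (rfl | ⟨hp, _⟩); exact hxy; exact hp
    · rintro ⟨⟨u, v⟩, ⟨hmem, hne⟩, rfl⟩
      exact hne (by simp [hB _ _ _ hmem hxy])
  · rintro ⟨BR, rfl, hdom, hBR⟩
    ext ⟨p1, p2⟩
    simp only [Set.mem_setOf_eq, Set.mem_singleton_iff, Set.mem_union, Prod.mk.injEq]
    constructor
    · rintro ⟨z, ⟨rfl, rfl⟩, (⟨h1, h2⟩ | hmem)⟩
      · exact ⟨rfl, h2⟩
      · exact absurd ⟨(z, p2), hmem, rfl⟩ hdom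
    · rintro ⟨rfl, rfl⟩
      exact ⟨x, ⟨rfl, rfl⟩, Or.inl ⟨rfl, rfl⟩⟩
end
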